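/- For all ν ≥ 1/2 and all x > 0 the Turán type inequality I_{ν+1}²(x) − I_ν(x)·I_{ν+2}(x) < (2ν/x)·I_ν(x)·I_{ν+1}(x) holds. -/

import Mathlib

/-!
Write `I_ν(x) = (x/2)^ν F_ν(t)` with `t = (x/2)²` and `F_ν(t) = ∑ tᵐ / (m! Γ(m + ν + 1))`.
Termwise, `F_ν' = F_{ν+1}` and `t F_{ν+2} = F_ν - (ν + 1) F_{ν+1}`, and with the latter the
inequality becomes `φ(t) > 0` for `φ = F_ν² - t F_{ν+1}² - F_ν F_{ν+1}`. The same two identities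
give `(t φ(t))' = (2ν - 1) t F_{ν+1}² + ν F_ν F_{ν+1} > 0` on `t ≥ 0`, so `t φ(t)` increases
from its value `0` at `t = 0`.
-/

open Real Filter Topology

/-- The modified Bessel function of the first kind of real order `ν`. -/
noncomputable def besselI (ν x : ℝ) : ℝ :=
  ∑' m : ℕ, (x / 2) ^ (2 * (m : ℝ) + ν) / ((m.factorial : ℝ) * Real.Gamma ((m : ℝ) + ν + 1))

/-- `Ψ_ν(x) = I_{ν+1}(x) / I_ν(x)`. -/
noncomputable def psi (ν x : ℝ) : ℝ := besselI (ν + 1) x / besselI ν x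

noncomputable def besselCoeff (ν : ℝ) (m : ℕ) : ℝ :=
  ((m.factorial : ℝ) * Gamma (m + ν + 1))⁻¹

noncomputable def besselSeries (ν t : ℝ) : ℝ :=
  ∑' m : ℕ, besselCoeff ν m * t ^ m

lemma besselCoeff_pos {ν : ℝ} (hν : -1 < ν) (m : ℕ) : 0 < besselCoeff ν m := by
  have := Gamma_pos_of_pos (by linarith [m.cast_nonneg (α := ℝ)] : (0 : ℝ) < m + ν + 1)
  unfold besselCoeff
  positivity

lemma besselCoeff_eq_mul_besselCoeff_add_one {ν : ℝ} (hν : -1 < ν) (m : ℕ) :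
    besselCoeff ν m = (m + ν + 1) * besselCoeff (ν + 1) m := by
  have h : (0 : ℝ) < m + ν + 1 := by linarith [m.cast_nonneg (α := ℝ)]
  rw [besselCoeff, besselCoeff, show (m : ℝ) + (ν + 1) + 1 = m + ν + 1 + 1 by ring,
    Gamma_add_one h.ne', mul_left_comm (m.factorial : ℝ), mul_inv ((m : ℝ) + ν + 1),
    mul_inv_cancel_left₀ h.ne']

lemma succ_mul_besselCoeff_succ (ν : ℝ) (m : ℕ) :
    (m + 1) * besselCoeff ν (m + 1) = besselCoeff (ν + 1) m := by
  rw [besselCoeff, besselCoeff, Nat.factorial_succ, Nat.cast_mul, Nat.cast_succ,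
    show (m : ℝ) + 1 + ν + 1 = m + (ν + 1) + 1 by ring, mul_assoc, mul_inv ((m : ℝ) + 1),
    mul_inv_cancel_left₀ m.cast_add_one_ne_zero]

lemma summable_besselCoeff_mul_pow {ν : ℝ} (hν : -1 < ν) (t : ℝ) :
    Summable fun m : ℕ => besselCoeff ν m * t ^ m := by
  refine summable_of_ratio_norm_eventually_le (r := 1 / 2) (by norm_num) ?_
  obtain ⟨N, hN⟩ := exists_nat_ge (2 * |t|)
  filter_upwards [eventually_ge_atTop N] with m hNm
  have hm : 2 * |t| ≤ m := hN.trans (by exact_mod_cast hNm)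
  have hc := besselCoeff_pos hν (m + 1)
  have hratio : besselCoeff ν m = besselCoeff ν (m + 1) * ((m + 1) * (m + ν + 1)) := by
    rw [besselCoeff_eq_mul_besselCoeff_add_one hν, ← succ_mul_besselCoeff_succ]
    ring
  have hgrowth : 2 * |t| ≤ (m + 1) * (m + ν + 1) := by
    nlinarith [m.cast_nonneg (α := ℝ)]
  rw [norm_mul, norm_mul, norm_pow, norm_pow, Real.norm_of_nonneg hc.le, Real.norm_of_nonneg
    (besselCoeff_pos hν m).le, hratio, Real.norm_eq_abs, pow_succ]
  have := mul_le_mul_of_nonneg_left hgrowth (mul_nonneg hc.le (pow_nonneg (abs_nonneg t) m))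
  linarith

lemma hasDerivAt_besselSeries {ν : ℝ} (hν : -1 < ν) (t : ℝ) :
    HasDerivAt (besselSeries ν) (besselSeries (ν + 1) t) t := by
  have hshift (y : ℝ) (k : ℕ) : besselCoeff ν (k + 1) * ((k + 1 : ℕ) * y ^ (k + 1 - 1)) =
      besselCoeff (ν + 1) k * y ^ k := by
    rw [← succ_mul_besselCoeff_succ, Nat.add_sub_cancel, Nat.cast_succ]
    ring
  have hsummable (y : ℝ) : Summable fun m : ℕ => besselCoeff ν m * (m * y ^ (m - 1)) :=
    (summable_nat_add_iff 1).mp <|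
      (summable_besselCoeff_mul_pow (by linarith) y).congr fun k => (hshift y k).symm
  have hR : 0 < |t| + 1 := by positivity
  have ht : t ∈ Metric.ball (0 : ℝ) (|t| + 1) := by simp
  have hderiv := hasDerivAt_tsum_of_isPreconnected (hsummable (|t| + 1)) Metric.isOpen_ball
    (convex_ball (0 : ℝ) (|t| + 1)).isPreconnected
    (fun m y _ => (hasDerivAt_pow m y).const_mul (besselCoeff ν m))
    (fun m y hy => ?_) (Metric.mem_ball_self hR) (summable_besselCoeff_mul_pow hν 0) ht
  · rw [tsum_eq_zero_add' ((summable_nat_add_iff 1).mpr (hsummable t)),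
      tsum_congr (hshift t), Nat.cast_zero, zero_mul, mul_zero, zero_add] at hderiv
    exact hderiv
  · have hyR : |y| ≤ |t| + 1 := by simpa using (mem_ball_zero_iff.mp hy).le
    rw [Real.norm_eq_abs, abs_mul, abs_mul, abs_pow, Nat.abs_cast,
      abs_of_pos (besselCoeff_pos hν m)]
    gcongr
    exact (besselCoeff_pos hν m).le

lemma besselSeries_pos {ν t : ℝ} (hν : -1 < ν) (ht : 0 ≤ t) : 0 < besselSeries ν t :=
  (summable_besselCoeff_mul_pow hν t).tsum_pos
    (fun m => mul_nonneg (besselCoeff_pos hν m).le (pow_nonneg ht m)) 0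
    (by simpa using besselCoeff_pos hν 0)

lemma mul_besselSeries_add_two {ν : ℝ} (hν : -1 < ν) (t : ℝ) :
    t * besselSeries (ν + 2) t = besselSeries ν t - (ν + 1) * besselSeries (ν + 1) t := by
  have hν1 : -1 < ν + 1 := by linarith
  have hshift (k : ℕ) : ((k + 1 : ℕ) : ℝ) * besselCoeff (ν + 1) (k + 1) * t ^ (k + 1) =
      besselCoeff (ν + 2) k * t ^ k * t := by
    rw [Nat.cast_succ, succ_mul_besselCoeff_succ, add_assoc, one_add_one_eq_two, pow_succ]
    ring
  have hsub : besselSeries ν t - (ν + 1) * besselSeries (ν + 1) t =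
      ∑' m : ℕ, (m * besselCoeff (ν + 1) m) * t ^ m := by
    rw [besselSeries, besselSeries, ← tsum_mul_left,
      ← (summable_besselCoeff_mul_pow hν t).tsum_sub
        ((summable_besselCoeff_mul_pow hν1 t).mul_left _)]
    congr 1 with m
    rw [besselCoeff_eq_mul_besselCoeff_add_one hν]
    ring
  have hsummable : Summable fun k : ℕ => besselCoeff (ν + 2) k * t ^ k * t :=
    (summable_besselCoeff_mul_pow (by linarith) t).mul_right t
  rw [hsub, tsum_eq_zero_add' (hsummable.congr fun k => (hshift k).symm), tsum_congr hshift,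
    tsum_mul_right, besselSeries, Nat.cast_zero, zero_mul, zero_mul, zero_add, mul_comm]

lemma besselI_eq_rpow_mul_besselSeries (ν : ℝ) {x : ℝ} (hx : 0 < x) :
    besselI ν x = (x / 2) ^ ν * besselSeries ν ((x / 2) ^ 2) := by
  rw [besselI, besselSeries, ← tsum_mul_left]
  congr 1 with m
  rw [div_eq_mul_inv, ← besselCoeff, rpow_add (by positivity), rpow_mul (by positivity),
    rpow_natCast, rpow_ofNat]
  ring

lemma mul_sq_besselSeries_succ_add_mul_lt_sq {ν t : ℝ} (hν : 1 / 2 ≤ ν) (ht : 0 < t) :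
    t * besselSeries (ν + 1) t ^ 2 + besselSeries ν t * besselSeries (ν + 1) t <
      besselSeries ν t ^ 2 := by
  have hν0 : -1 < ν := by linarith
  have hν1 : -1 < ν + 1 := by linarith
  set F := besselSeries ν
  set G := besselSeries (ν + 1)
  let g s := s * (F s ^ 2 - s * G s ^ 2 - F s * G s)
  have hg (s : ℝ) : HasDerivAt g ((2 * ν - 1) * s * G s ^ 2 + ν * F s * G s) s := by
    have hF := hasDerivAt_besselSeries hν0 s
    have hG := hasDerivAt_besselSeries hν1 s
    rw [add_assoc, one_add_one_eq_two] at hG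
    refine ((hasDerivAt_id' s).mul
      (((hF.pow 2).sub ((hasDerivAt_id' s).mul (hG.pow 2))).sub (hF.mul hG))).congr_deriv ?_
    simp only [Pi.sub_apply, Pi.mul_apply, Pi.pow_apply]
    linear_combination (-2 * s * G s - F s) * mul_besselSeries_add_two hν0 s
  have hmono : StrictMonoOn g (Set.Ici 0) := by
    refine strictMonoOn_of_hasDerivWithinAt_pos (convex_Ici 0)
      (fun s _ => (hg s).continuousAt.continuousWithinAt)
      (fun s _ => (hg s).hasDerivWithinAt) fun s hs => ?_
    rw [interior_Ici, Set.mem_Ioi] at hs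
    have := besselSeries_pos hν0 hs.le
    have := besselSeries_pos hν1 hs.le
    have : 0 ≤ 2 * ν - 1 := by linarith
    positivity
  have hg_pos : 0 < g t := by simpa [g] using hmono (Set.mem_Ici.2 le_rfl) ht.le ht
  linarith [pos_of_mul_pos_right hg_pos ht.le]

theorem stmt_15 (ν x : ℝ) (hν : 1 / 2 ≤ ν) (hx : 0 < x) :
    (besselI (ν + 1) x) ^ 2 - besselI ν x * besselI (ν + 2) x <
      (2 * ν / x) * besselI ν x * besselI (ν + 1) x := by
  set t := (x / 2) ^ 2
  set a := (x / 2) ^ ν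
  have ha1 : (x / 2) ^ (ν + 1) = a * (x / 2) := by rw [rpow_add (by positivity), rpow_one]
  have ha2 : (x / 2) ^ (ν + 2) = a * t := by rw [rpow_add (by positivity), rpow_ofNat]
  have hν2x : 2 * ν / x * (x / 2) = ν := by field_simp
  have hrec := mul_besselSeries_add_two (by linarith : -1 < ν) t
  simp only [besselI_eq_rpow_mul_besselSeries _ hx, ha1, ha2]
  rw [← sub_neg]
  calc _ = a ^ 2 * (t * besselSeries (ν + 1) t ^ 2 + besselSeries ν t * besselSeries (ν + 1) t -
          besselSeries ν t ^ 2) := by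
        linear_combination (-(a ^ 2) * besselSeries ν t) * hrec -
          (a ^ 2 * besselSeries ν t * besselSeries (ν + 1) t) * hν2x
    _ < 0 := mul_neg_of_pos_of_neg (by positivity)
        (sub_neg.2 (mul_sq_besselSeries_succ_add_mul_lt_sq hν (by positivity)))
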